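/- arXiv:2604.14742 — 3 statements merged into one kernel-verified Lean document; each statement's English description precedes it below -/
import Mathlib

section
/- Let M be a free ℤ-module of rank 2g (g ≥ 1) with basis x_1,...,x_{2g}, and set v₀ = Σ_{i=1}^g (x_i⊗x_{g+i} − x_{g+i}⊗x_i). Let K₀ = Sym²M ⊕ ℤv₀ ⊆ M⊗M and K = Sym²M + ℤu where u = Σ_{i=1}^g x_i⊗x_{g+i}. Then K₀ ⊆ K and the quotient K/K₀ is isomorphic to ℤ/2ℤ. -/
open TensorProduct

noncomputable def tmulFun {M : Type*} [AddCommGroup M] [Module ℤ M]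
    (f g : M →ₗ[ℤ] ℤ) : M ⊗[ℤ] M →ₗ[ℤ] ℤ :=
  TensorProduct.lift (LinearMap.mk₂ ℤ (fun m n => f m * g n)
    (by intros; simp [add_mul]) (by intros; simp [smul_eq_mul]; ring)
    (by intros; simp [mul_add]) (by intros; simp [smul_eq_mul]; ring))

@[simp] lemma tmulFun_tmul {M : Type*} [AddCommGroup M] [Module ℤ M]
    (f g : M →ₗ[ℤ] ℤ) (m n : M) : tmulFun f g (m ⊗ₜ[ℤ] n) = f m * g n := rfl

noncomputable def castLM : ℤ →ₗ[ℤ] ZMod 2 := (Int.castAddHom (ZMod 2)).toIntLinearMap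

@[simp] lemma castLM_apply (n : ℤ) : castLM n = (n : ZMod 2) := rfl

/-- Let `M` be free of rank `2g` (`g ≥ 1`) over `ℤ` with basis `x`, and set
`v₀ = Σ_i (x_i ⊗ x_{g+i} - x_{g+i} ⊗ x_i)`, `u = Σ_i x_i ⊗ x_{g+i}`,
`K₀ = Sym²M ⊕ ℤv₀` and `K = Sym²M + ℤu`. Then `K₀ ⊆ K` and `K/K₀ ≅ ℤ/2ℤ`. -/
theorem K_div_K0 (g : ℕ) (hg : 1 ≤ g) (M : Type*) [AddCommGroup M] [Module ℤ M]
    (x : Module.Basis (Fin g ⊕ Fin g) ℤ M) :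
    let Sym2M : Submodule ℤ (M ⊗[ℤ] M) :=
      Submodule.span ℤ {z | ∃ m : M, z = m ⊗ₜ[ℤ] m}
    let v₀ : M ⊗[ℤ] M := ∑ i : Fin g,
      (x (Sum.inl i) ⊗ₜ[ℤ] x (Sum.inr i) - x (Sum.inr i) ⊗ₜ[ℤ] x (Sum.inl i))
    let u : M ⊗[ℤ] M := ∑ i : Fin g, x (Sum.inl i) ⊗ₜ[ℤ] x (Sum.inr i)
    let K₀ : Submodule ℤ (M ⊗[ℤ] M) := Sym2M ⊔ Submodule.span ℤ {v₀}
    let K : Submodule ℤ (M ⊗[ℤ] M) := Sym2M ⊔ Submodule.span ℤ {u}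
    Sym2M ⊓ Submodule.span ℤ {v₀} = ⊥ ∧
    K₀ ≤ K ∧
    Nonempty ((↥K ⧸ Submodule.comap K.subtype K₀) ≃ₗ[ℤ] ZMod 2) := by
  intro Sym2M v₀ u K₀ K
  set i0 : Fin g := ⟨0, hg⟩ with hi0
  set ca : M →ₗ[ℤ] ℤ := x.coord (Sum.inl i0) with hca
  set cb : M →ₗ[ℤ] ℤ := x.coord (Sum.inr i0) with hcb
  have hcoord : ∀ (p : Fin g ⊕ Fin g) (j : Fin g ⊕ Fin g),
      x.coord p (x j) = if j = p then 1 else 0 := by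
    intro p j
    simp [Module.Basis.coord_apply, Finsupp.single_apply]
  have hsum : ∀ (f : Fin g → ℤ), (∀ i, i ≠ i0 → f i = 0) → ∑ i, f i = f i0 := by
    intro f h
    exact Finset.sum_eq_single_of_mem i0 (Finset.mem_univ _) (fun b _ hb => h b hb)
  set φ : M ⊗[ℤ] M →ₗ[ℤ] ℤ := tmulFun ca cb + tmulFun cb ca with hφ
  set ψ : M ⊗[ℤ] M →ₗ[ℤ] ℤ := tmulFun ca cb - tmulFun cb ca with hψ
  have hφu : φ u = 1 := by
    simp only [hφ, u, map_sum, LinearMap.add_apply, tmulFun_tmul, hca, hcb, hcoord]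
    simp [Finset.sum_ite_eq', i0]
  have hψv : ψ v₀ = 2 := by
    simp only [hψ, v₀, map_sum, map_sub, LinearMap.sub_apply, tmulFun_tmul, hca, hcb]
    rw [hsum]
    · simp [hcoord]
    · intro i hi
      simp [hcoord, hi]
  have hφv : φ v₀ = 0 := by
    simp only [hφ, v₀, map_sum, map_sub, LinearMap.add_apply, tmulFun_tmul, hca, hcb]
    rw [hsum]
    · simp [hcoord]
    · intro i hi
      simp [hcoord, hi]
  have hψsym : Sym2M ≤ LinearMap.ker ψ := by
    rw [Submodule.span_le]
    rintro z ⟨m, rfl⟩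
    simp [hψ, LinearMap.mem_ker, mul_comm]
  -- φ takes even values on Sym2M generators, so castLM ∘ φ kills Sym2M
  set φ2 : M ⊗[ℤ] M →ₗ[ℤ] ZMod 2 := castLM ∘ₗ φ with hφ2
  have hφ2sym : Sym2M ≤ LinearMap.ker φ2 := by
    rw [Submodule.span_le]
    rintro z ⟨m, rfl⟩
    have : φ (m ⊗ₜ[ℤ] m) = 2 * (ca m * cb m) := by
      simp [hφ]; ring
    rw [SetLike.mem_coe, LinearMap.mem_ker, hφ2, LinearMap.comp_apply, this, castLM_apply]
    push_cast
    rw [show ((2:ZMod 2)) = 0 by decide]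
    ring
  have hφ2v : φ2 v₀ = 0 := by simp [hφ2, hφv]
  have hφ2u : φ2 u = 1 := by simp [hφ2, hφu]
  -- symmetrized elements are in Sym2M
  have hsymm : ∀ m n : M, m ⊗ₜ[ℤ] n + n ⊗ₜ[ℤ] m ∈ Sym2M := by
    intro m n
    have h1 : (m + n) ⊗ₜ[ℤ] (m + n) ∈ Sym2M := Submodule.subset_span ⟨m + n, rfl⟩
    have h2 : m ⊗ₜ[ℤ] m ∈ Sym2M := Submodule.subset_span ⟨m, rfl⟩
    have h3 : n ⊗ₜ[ℤ] n ∈ Sym2M := Submodule.subset_span ⟨n, rfl⟩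
    have heq : m ⊗ₜ[ℤ] n + n ⊗ₜ[ℤ] m
        = (m + n) ⊗ₜ[ℤ] (m + n) - m ⊗ₜ[ℤ] m - n ⊗ₜ[ℤ] n := by
      simp [tmul_add, add_tmul]
      abel
    rw [heq]
    exact sub_mem (sub_mem h1 h2) h3
  -- w := 2u - v₀ ∈ Sym2M
  have hw : (2 : ℤ) • u - v₀ ∈ Sym2M := by
    have : (2 : ℤ) • u - v₀ = ∑ i : Fin g,
        (x (Sum.inl i) ⊗ₜ[ℤ] x (Sum.inr i) + x (Sum.inr i) ⊗ₜ[ℤ] x (Sum.inl i)) := by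
      show (2:ℤ) • (∑ i : Fin g, x (Sum.inl i) ⊗ₜ[ℤ] x (Sum.inr i)) -
        ∑ i : Fin g, (x (Sum.inl i) ⊗ₜ[ℤ] x (Sum.inr i) - x (Sum.inr i) ⊗ₜ[ℤ] x (Sum.inl i)) = _
      rw [two_smul, ← Finset.sum_add_distrib, ← Finset.sum_sub_distrib]
      exact Finset.sum_congr rfl fun i _ => by abel
    rw [this]
    exact Submodule.sum_mem _ fun i _ => hsymm _ _
  have hv0K : v₀ ∈ K := by
    have hu : u ∈ K := Submodule.mem_sup_right (Submodule.mem_span_singleton_self u)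
    have : v₀ = (2 : ℤ) • u - ((2 : ℤ) • u - v₀) := by abel
    rw [this]
    exact sub_mem (Submodule.smul_mem _ _ hu) (Submodule.mem_sup_left hw)
  have hK0K : K₀ ≤ K := by
    refine sup_le le_sup_left ?_
    rw [Submodule.span_le, Set.singleton_subset_iff]
    exact hv0K
  have hinter : Sym2M ⊓ Submodule.span ℤ {v₀} = ⊥ := by
    rw [eq_bot_iff]
    intro z hz
    rw [Submodule.mem_inf] at hz
    obtain ⟨hz1, hz2⟩ := hz
    rw [Submodule.mem_span_singleton] at hz2
    obtain ⟨c, rfl⟩ := hz2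
    have h0 : ψ (c • v₀) = 0 := hψsym hz1
    rw [map_smul, hψv, smul_eq_mul] at h0
    have : c = 0 := by omega
    simp [this]
  refine ⟨hinter, hK0K, ?_⟩
  -- K₀ ≤ ker φ2
  have hK0ker : K₀ ≤ LinearMap.ker φ2 := by
    refine sup_le hφ2sym ?_
    rw [Submodule.span_le, Set.singleton_subset_iff]
    simpa [LinearMap.mem_ker] using hφ2v
  set f : ↥K →ₗ[ℤ] ZMod 2 := φ2 ∘ₗ K.subtype with hf
  have hle : Submodule.comap K.subtype K₀ ≤ LinearMap.ker f := by
    intro z hz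
    exact hK0ker hz
  set q := Submodule.liftQ (Submodule.comap K.subtype K₀) f hle with hq
  have hker : LinearMap.ker f ≤ Submodule.comap K.subtype K₀ := by
    rintro ⟨z, hzK⟩ hzf
    simp only [LinearMap.mem_ker, hf, LinearMap.comp_apply, Submodule.subtype_apply] at hzf
    rw [Submodule.mem_sup] at hzK
    obtain ⟨s, hs, t, ht, rfl⟩ := hzK
    rw [Submodule.mem_span_singleton] at ht
    obtain ⟨n, rfl⟩ := ht
    have : φ2 (s + n • u) = (n : ZMod 2) := by
      have hs0 : φ2 s = 0 := hφ2sym hs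
      simp [map_add, map_smul, hs0, hφ2u]
    rw [this] at hzf
    have h2n : (2 : ℤ) ∣ n := by
      rwa [ZMod.intCast_zmod_eq_zero_iff_dvd] at hzf
    obtain ⟨k, rfl⟩ := h2n
    have : s + (2 * k) • u = (s + k • ((2:ℤ) • u - v₀)) + k • v₀ := by
      module
    show s + (2 * k) • u ∈ K₀
    rw [this]
    exact add_mem (Submodule.mem_sup_left (add_mem hs (Submodule.smul_mem _ _ hw)))
      (Submodule.mem_sup_right (Submodule.smul_mem _ _
        (Submodule.mem_span_singleton_self v₀)))
  have hinj : Function.Injective q := by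
    rw [← LinearMap.ker_eq_bot, hq, Submodule.ker_liftQ_eq_bot]
    exact hker
  have huK : u ∈ K := Submodule.mem_sup_right (Submodule.mem_span_singleton_self u)
  have hsurj : Function.Surjective q := by
    intro c
    refine ⟨Submodule.Quotient.mk ((c.val : ℤ) • ⟨u, huK⟩), ?_⟩
    rw [hq, Submodule.liftQ_apply]
    simp only [hf, map_smul, LinearMap.comp_apply, Submodule.subtype_apply]
    show (c.val : ℤ) • φ2 u = c
    rw [hφ2u]
    simp [zsmul_eq_mul]
  exact ⟨LinearEquiv.ofBijective q ⟨hinj, hsurj⟩⟩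
end

section
/- Let G be a group, ℤG its group ring, J the augmentation ideal, and let γ, δ ∈ G. Writing c = γ−1 and d = δ−1 in ℤG, we have the identity [γ,δ] − 1 ≡ cd − dc + dcd − cdc − (cdd − dcc) modulo J⁴, where [γ,δ] = γδγ⁻¹δ⁻¹. -/
/-- The augmentation ideal of the integral group ring of a group `G`. -/
noncomputable def augIdeal (G : Type*) [Group G] : Ideal (MonoidAlgebra ℤ G) :=
  RingHom.ker ((MonoidAlgebra.lift ℤ ℤ G) 1).toRingHom

open scoped commutatorElement

/-- For `γ, δ` in a group `G`, with `c = γ - 1` and `d = δ - 1` in `ℤG`, we have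
`[γ,δ] - 1 ≡ cd - dc + dcd - cdc - (cdd - dcc)` modulo `J⁴`. -/
theorem commutator_sub_one_congr_modJ4 (G : Type*) [Group G] (γ δ : G) :
    (MonoidAlgebra.of ℤ G ⁅γ, δ⁆ - 1 -
      (let c := MonoidAlgebra.of ℤ G γ - 1
       let d := MonoidAlgebra.of ℤ G δ - 1
       c * d - d * c + (d * c * d - c * d * c) - (c * d * d - d * c * c)))
      ∈ (augIdeal G) ^ 4 := by
  set J := augIdeal G with hJ
  set a := MonoidAlgebra.of ℤ G γ with ha
  set b := MonoidAlgebra.of ℤ G δ with hb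
  set a' := MonoidAlgebra.of ℤ G γ⁻¹ with ha'
  set b' := MonoidAlgebra.of ℤ G δ⁻¹ with hb'
  have haa' : a * a' = 1 := by rw [ha, ha', ← map_mul, mul_inv_cancel, map_one]
  have ha'a : a' * a = 1 := by rw [ha, ha', ← map_mul, inv_mul_cancel, map_one]
  have hbb' : b * b' = 1 := by rw [hb, hb', ← map_mul, mul_inv_cancel, map_one]
  have hb'b : b' * b = 1 := by rw [hb, hb', ← map_mul, inv_mul_cancel, map_one]
  set c := a - 1 with hc
  set d := b - 1 with hd
  have hcJ : c ∈ J := by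
    simp [hJ, augIdeal, RingHom.mem_ker, hc, ha]
  have hdJ : d ∈ J := by
    simp [hJ, augIdeal, RingHom.mem_ker, hd, hb]
  -- J absorbs multiplication on the right
  have hright : ∀ x y : MonoidAlgebra ℤ G, x ∈ J → x * y ∈ J := by
    intro x y hx
    have hx0 : ((MonoidAlgebra.lift ℤ ℤ G) 1).toRingHom x = 0 := hx
    show ((MonoidAlgebra.lift ℤ ℤ G) 1).toRingHom (x * y) = 0
    rw [map_mul, hx0, zero_mul]
  set E := c * d - d * c + (d * c * d - c * d * c) - (c * d * d - d * c * c) with hE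
  set Y := -((c * d - d * c) * (d * c))
      - (d * c * d - c * d * c - c * d * d + d * c * c) * (c + d + d * c) with hY
  have hcomm : MonoidAlgebra.of ℤ G ⁅γ, δ⁆ = a * b * a' * b' := by
    simp [commutatorElement_def, map_mul, ha, hb, ha', hb']
  -- the key algebraic identity
  have key : a * b * a' * b' - 1 - E = Y * (a' * b') := by
    have h2 : (a * b * a' * b' - 1 - E - Y * (a' * b')) * (b * a) = 0 := by
      have e1 : a * b * a' * b' * (b * a) = a * b := by
        calc a * b * a' * b' * (b * a) = a * b * a' * (b' * b) * a := by noncomm_ring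
        _ = a * b := by rw [hb'b]; rw [mul_one, mul_assoc, mul_assoc, ha'a, mul_one]
      have e2 : Y * (a' * b') * (b * a) = Y := by
        calc Y * (a' * b') * (b * a) = Y * (a' * ((b' * b) * a)) := by noncomm_ring
        _ = Y := by rw [hb'b, one_mul, ha'a, mul_one]
      have expand : (a * b * a' * b' - 1 - E - Y * (a' * b')) * (b * a)
          = a * b * a' * b' * (b * a) - (b * a) - E * (b * a) - Y * (a' * b') * (b * a) := by
        noncomm_ring
      rw [expand, e1, e2]
      -- now a pure polynomial identity in a, b
      rw [hE, hY, hc, hd]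
      noncomm_ring
    have h3 : (a * b * a' * b' - 1 - E - Y * (a' * b')) * (b * a) * (a' * b')
        = a * b * a' * b' - 1 - E - Y * (a' * b') := by
      calc (a * b * a' * b' - 1 - E - Y * (a' * b')) * (b * a) * (a' * b')
          = (a * b * a' * b' - 1 - E - Y * (a' * b')) * (b * ((a * a') * b')) := by
            noncomm_ring
        _ = _ := by rw [haa', one_mul, hbb', mul_one]
    have h4 := h3.symm
    rw [h2, zero_mul] at h4
    exact sub_eq_zero.mp h4
  -- unfold the lets in the goal
  show MonoidAlgebra.of ℤ G ⁅γ, δ⁆ - 1 - E ∈ J ^ 4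
  rw [hcomm, key]
  -- now show Y * (a' * b') ∈ J ^ 4
  have h31 : ∀ x y : MonoidAlgebra ℤ G, x ∈ J ^ 3 → y ∈ J → x * y ∈ J ^ 4 := by
    intro x y hx hy
    rw [Submodule.pow_succ]
    exact Ideal.mul_mem_mul hx hy
  have hm2 : ∀ x y : MonoidAlgebra ℤ G, x ∈ J → y ∈ J → x * y ∈ J ^ 2 := by
    intro x y hx hy
    rw [Submodule.pow_succ, Submodule.pow_one]
    exact Ideal.mul_mem_mul hx hy
  have hm3 : ∀ x y z : MonoidAlgebra ℤ G, x ∈ J → y ∈ J → z ∈ J → x * y * z ∈ J ^ 3 := by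
    intro x y z hx hy hz
    rw [Submodule.pow_succ]
    exact Ideal.mul_mem_mul (hm2 x y hx hy) hz
  have hcddc2 : c * d - d * c ∈ J ^ 2 :=
    sub_mem (hm2 c d hcJ hdJ) (hm2 d c hdJ hcJ)
  have hQ3 : d * c * d - c * d * c - c * d * d + d * c * c ∈ J ^ 3 := by
    exact add_mem (sub_mem (sub_mem (hm3 d c d hdJ hcJ hdJ) (hm3 c d c hcJ hdJ hcJ))
      (hm3 c d d hcJ hdJ hdJ)) (hm3 d c c hdJ hcJ hcJ)
  have hsum : (c + d + d * c) * (a' * b') ∈ J :=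
    hright _ _ (add_mem (add_mem hcJ hdJ) (hright d c hdJ))
  have hT3 : (c * d - d * c) * d ∈ J ^ 3 := by
    have : (c * d - d * c) * d = c * d * d - d * c * d := by noncomm_ring
    rw [this]
    exact sub_mem (hm3 c d d hcJ hdJ hdJ) (hm3 d c d hdJ hcJ hdJ)
  have hYu : Y * (a' * b')
      = -(((c * d - d * c) * d) * (c * (a' * b')))
        - (d * c * d - c * d * c - c * d * d + d * c * c) * ((c + d + d * c) * (a' * b')) := by
    rw [hY]; noncomm_ring
  rw [hYu]
  exact sub_mem (neg_mem (h31 _ _ hT3 (hright c (a' * b') hcJ))) (h31 _ _ hQ3 hsum)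
end

section
/- Let Γ be a group generated by γ_1,...,γ_{2g}, δ_b, δ_{q'} subject to the surface relation [γ_1,γ_{g+1}]⋯[γ_g,γ_{2g}] = δ_b δ_{q'}. Let J be the augmentation ideal of ℤΓ and write c_ν = γ_ν − 1, d_b = δ_b − 1, d_{q'} = δ_{q'} − 1. Then Σ_{ν=1}^g { (c_ν c_{g+ν} − c_{g+ν} c_ν) + (c_{g+ν} c_ν c_{g+ν} − c_ν c_{g+ν} c_ν) − (c_ν c_{g+ν} c_{g+ν} − c_{g+ν} c_ν c_ν) } ≡ d_b + d_{q'} + d_b d_{q'} modulo J⁴. -/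
open scoped commutatorElement

namespace SurfaceAux

open MonoidAlgebra

section RingIds

variable {A : Type*} [Ring A]

lemma ringid1 (P Q U : A) (h : Q * (P * U) = 1) :
    P * (Q * U) - 1 = ((P - 1) * (Q - 1) - (Q - 1) * (P - 1)) * U := by
  calc P * (Q * U) - 1 = P * (Q * U) - Q * (P * U) := by rw [h]
    _ = ((P - 1) * (Q - 1) - (Q - 1) * (P - 1)) * U := by noncomm_ring

lemma ringid2 (c d u : A) :
    (c * d - d * c) * u
      - ((c * d - d * c) + (d * c * d - c * d * c) - (c * d * d - d * c * c))
      = (c * d - d * c) * ((u - 1) + c + d) := by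
  noncomm_ring

lemma ringid3 (a b c d : A) :
    (a * b - 1) + c + d = ((a - 1) + c) + ((b - 1) + d) + (a - 1) * (b - 1) := by
  noncomm_ring

lemma ringid4 (P R : A) (h : P * R = 1) :
    (R - 1) + (P - 1) = -((P - 1) * (R - 1)) := by
  have e : (P - 1) * (R - 1) = P * R - P - R + 1 := by noncomm_ring
  rw [e, h]; abel

lemma ringid5 (P Q : A) :
    P * Q - 1 = (P - 1) + (Q - 1) + (P - 1) * (Q - 1) := by
  noncomm_ring

lemma ringid6 (P Q S : A) :
    P * Q - 1 - ((P - 1) + S) = ((Q - 1) - S) + (P - 1) * (Q - 1) := by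
  noncomm_ring

end RingIds

variable {Γ : Type*} [Group Γ]

lemma pow_two_eq (J : Ideal (MonoidAlgebra ℤ Γ)) : J ^ 2 = J * J := by
  rw [Submodule.pow_succ, Submodule.pow_one]

lemma pow_four_eq (J : Ideal (MonoidAlgebra ℤ Γ)) : J ^ 4 = J ^ 2 * J ^ 2 := by
  rw [Submodule.pow_succ, Submodule.pow_succ, Submodule.pow_succ, Submodule.pow_one, mul_assoc]

lemma J_mul_right {x : MonoidAlgebra ℤ Γ} (hx : x ∈ augIdeal Γ)
    (r : MonoidAlgebra ℤ Γ) : x * r ∈ augIdeal Γ := by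
  simp only [augIdeal, RingHom.mem_ker] at hx ⊢
  rw [map_mul, hx, zero_mul]

lemma J2_mul_right {x : MonoidAlgebra ℤ Γ} (hx : x ∈ (augIdeal Γ) ^ 2)
    (r : MonoidAlgebra ℤ Γ) : x * r ∈ (augIdeal Γ) ^ 2 := by
  rw [pow_two_eq] at hx ⊢
  refine Submodule.mul_induction_on hx (fun a ha b hb => ?_) (fun u v hu hv => ?_)
  · rw [mul_assoc]
    exact Submodule.mul_mem_mul ha (J_mul_right hb r)
  · rw [add_mul]
    exact add_mem hu hv

lemma of_sub_one_mem (x : Γ) : (of ℤ Γ x - 1 : MonoidAlgebra ℤ Γ) ∈ augIdeal Γ := by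
  simp [augIdeal, RingHom.mem_ker]

lemma mul_mem_J4 {a b : MonoidAlgebra ℤ Γ} (ha : a ∈ (augIdeal Γ) ^ 2)
    (hb : b ∈ (augIdeal Γ) ^ 2) : a * b ∈ (augIdeal Γ) ^ 4 := by
  rw [pow_four_eq]
  exact Ideal.mul_mem_mul ha hb

lemma cd_sub_dc_mem (x y : Γ) :
    ((of ℤ Γ x - 1) * (of ℤ Γ y - 1) - (of ℤ Γ y - 1) * (of ℤ Γ x - 1)) ∈ (augIdeal Γ) ^ 2 := by
  rw [pow_two_eq]
  exact sub_mem (Ideal.mul_mem_mul (of_sub_one_mem x) (of_sub_one_mem y))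
    (Ideal.mul_mem_mul (of_sub_one_mem y) (of_sub_one_mem x))

lemma inv_add_mem (x : Γ) :
    ((of ℤ Γ x⁻¹ - 1) + (of ℤ Γ x - 1)) ∈ (augIdeal Γ) ^ 2 := by
  have hx : (of ℤ Γ x) * (of ℤ Γ x⁻¹) = 1 := by
    rw [← map_mul, mul_inv_cancel, map_one]
  rw [ringid4 _ _ hx, pow_two_eq]
  exact neg_mem (Ideal.mul_mem_mul (of_sub_one_mem x) (of_sub_one_mem x⁻¹))

lemma comm_eq (x y : Γ) :
    (of ℤ Γ ⁅x, y⁆ - 1 : MonoidAlgebra ℤ Γ)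
      = ((of ℤ Γ x - 1) * (of ℤ Γ y - 1) - (of ℤ Γ y - 1) * (of ℤ Γ x - 1))
        * of ℤ Γ (x⁻¹ * y⁻¹) := by
  rw [show (⁅x, y⁆ : Γ) = x * (y * (x⁻¹ * y⁻¹)) from by group, map_mul, map_mul]
  refine ringid1 _ _ _ ?_
  rw [← map_mul, ← map_mul, show (y * (x * (x⁻¹ * y⁻¹)) : Γ) = 1 from by group, map_one]

lemma comm_mem (x y : Γ) : (of ℤ Γ ⁅x, y⁆ - 1 : MonoidAlgebra ℤ Γ) ∈ (augIdeal Γ) ^ 2 := by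
  rw [comm_eq]
  exact J2_mul_right (cd_sub_dc_mem x y) _

lemma comm_congr (x y : Γ) :
    (of ℤ Γ ⁅x, y⁆ - 1 : MonoidAlgebra ℤ Γ)
      - (((of ℤ Γ x - 1) * (of ℤ Γ y - 1) - (of ℤ Γ y - 1) * (of ℤ Γ x - 1))
        + ((of ℤ Γ y - 1) * (of ℤ Γ x - 1) * (of ℤ Γ y - 1)
          - (of ℤ Γ x - 1) * (of ℤ Γ y - 1) * (of ℤ Γ x - 1))
        - ((of ℤ Γ x - 1) * (of ℤ Γ y - 1) * (of ℤ Γ y - 1)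
          - (of ℤ Γ y - 1) * (of ℤ Γ x - 1) * (of ℤ Γ x - 1)))
      ∈ (augIdeal Γ) ^ 4 := by
  rw [comm_eq x y, ringid2]
  apply mul_mem_J4 (cd_sub_dc_mem x y)
  rw [show (of ℤ Γ (x⁻¹ * y⁻¹) : MonoidAlgebra ℤ Γ) = of ℤ Γ x⁻¹ * of ℤ Γ y⁻¹ from map_mul _ _ _,
    ringid3]
  refine add_mem (add_mem (inv_add_mem x) (inv_add_mem y)) ?_
  rw [pow_two_eq]
  exact Ideal.mul_mem_mul (of_sub_one_mem x⁻¹) (of_sub_one_mem y⁻¹)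

lemma prod_sub_one_mem (l : List Γ)
    (h : ∀ a ∈ l, (of ℤ Γ a - 1 : MonoidAlgebra ℤ Γ) ∈ (augIdeal Γ) ^ 2) :
    (of ℤ Γ l.prod - 1 : MonoidAlgebra ℤ Γ) ∈ (augIdeal Γ) ^ 2 := by
  induction l with
  | nil =>
    rw [List.prod_nil, map_one, sub_self]
    exact zero_mem _
  | cons a l ih =>
    have hA := h a List.mem_cons_self
    have hP := ih (fun b hb => h b (List.mem_cons_of_mem a hb))
    rw [List.prod_cons, map_mul, ringid5]
    exact add_mem (add_mem hA hP) (J2_mul_right hA _)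

lemma prod_congr (l : List Γ)
    (h : ∀ a ∈ l, (of ℤ Γ a - 1 : MonoidAlgebra ℤ Γ) ∈ (augIdeal Γ) ^ 2) :
    (of ℤ Γ l.prod - 1 : MonoidAlgebra ℤ Γ)
      - (l.map (fun a => (of ℤ Γ a - 1 : MonoidAlgebra ℤ Γ))).sum ∈ (augIdeal Γ) ^ 4 := by
  induction l with
  | nil =>
    rw [List.prod_nil, map_one, sub_self, List.map_nil, List.sum_nil, sub_zero]
    exact zero_mem _
  | cons a l ih =>
    have hA := h a List.mem_cons_self
    have hP := prod_sub_one_mem l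
      (fun b hb => h b (List.mem_cons_of_mem a hb))
    have ih' := ih (fun b hb => h b (List.mem_cons_of_mem a hb))
    rw [List.prod_cons, List.map_cons, List.sum_cons, map_mul, ringid6]
    exact add_mem ih' (mul_mem_J4 hA hP)

end SurfaceAux

/-- Let `Γ` contain elements `γ_1,…,γ_{2g}, δ_b, δ_{q'}` satisfying the surface relation
`[γ_1,γ_{g+1}]⋯[γ_g,γ_{2g}] = δ_b δ_{q'}`. With `c_ν = γ_ν - 1`, `d_b = δ_b - 1`,
`d_{q'} = δ_{q'} - 1` in `ℤΓ`, we have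
`Σ_ν {(c_ν c_{g+ν} - c_{g+ν} c_ν) + (c_{g+ν} c_ν c_{g+ν} - c_ν c_{g+ν} c_ν)
  - (c_ν c_{g+ν} c_{g+ν} - c_{g+ν} c_ν c_ν)} ≡ d_b + d_{q'} + d_b d_{q'}` mod `J⁴`.
Here `γ (Sum.inl ν)` is `γ_ν` and `γ (Sum.inr ν)` is `γ_{g+ν}` for `1 ≤ ν ≤ g`. -/
theorem surface_relation_congr_modJ4 (Γ : Type*) [Group Γ] (g : ℕ)
    (γ : Fin g ⊕ Fin g → Γ) (δb δq : Γ)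
    (hrel : ((List.finRange g).map (fun ν => ⁅γ (Sum.inl ν), γ (Sum.inr ν)⁆)).prod = δb * δq) :
    (∑ ν : Fin g,
        (let c := MonoidAlgebra.of ℤ Γ (γ (Sum.inl ν)) - 1
         let c' := MonoidAlgebra.of ℤ Γ (γ (Sum.inr ν)) - 1
         (c * c' - c' * c) + (c' * c * c' - c * c' * c) - (c * c' * c' - c' * c * c)))
      - ((MonoidAlgebra.of ℤ Γ δb - 1) + (MonoidAlgebra.of ℤ Γ δq - 1) +
         (MonoidAlgebra.of ℤ Γ δb - 1) * (MonoidAlgebra.of ℤ Γ δq - 1))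
      ∈ (augIdeal Γ) ^ 4 := by
  classical
  open MonoidAlgebra SurfaceAux in
  show (∑ ν : Fin g,
        ((MonoidAlgebra.of ℤ Γ (γ (Sum.inl ν)) - 1) * (MonoidAlgebra.of ℤ Γ (γ (Sum.inr ν)) - 1)
            - (MonoidAlgebra.of ℤ Γ (γ (Sum.inr ν)) - 1) * (MonoidAlgebra.of ℤ Γ (γ (Sum.inl ν)) - 1)
          + ((MonoidAlgebra.of ℤ Γ (γ (Sum.inr ν)) - 1) * (MonoidAlgebra.of ℤ Γ (γ (Sum.inl ν)) - 1) * (MonoidAlgebra.of ℤ Γ (γ (Sum.inr ν)) - 1)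
            - (MonoidAlgebra.of ℤ Γ (γ (Sum.inl ν)) - 1) * (MonoidAlgebra.of ℤ Γ (γ (Sum.inr ν)) - 1) * (MonoidAlgebra.of ℤ Γ (γ (Sum.inl ν)) - 1))
          - ((MonoidAlgebra.of ℤ Γ (γ (Sum.inl ν)) - 1) * (MonoidAlgebra.of ℤ Γ (γ (Sum.inr ν)) - 1) * (MonoidAlgebra.of ℤ Γ (γ (Sum.inr ν)) - 1)
            - (MonoidAlgebra.of ℤ Γ (γ (Sum.inr ν)) - 1) * (MonoidAlgebra.of ℤ Γ (γ (Sum.inl ν)) - 1) * (MonoidAlgebra.of ℤ Γ (γ (Sum.inl ν)) - 1))))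
      - ((MonoidAlgebra.of ℤ Γ δb - 1) + (MonoidAlgebra.of ℤ Γ δq - 1) +
         (MonoidAlgebra.of ℤ Γ δb - 1) * (MonoidAlgebra.of ℤ Γ δq - 1))
      ∈ (augIdeal Γ) ^ 4
  set L : List Γ := (List.finRange g).map (fun ν => ⁅γ (Sum.inl ν), γ (Sum.inr ν)⁆) with hL
  have hmem : ∀ a ∈ L, (MonoidAlgebra.of ℤ Γ a - 1 : MonoidAlgebra ℤ Γ) ∈ (augIdeal Γ) ^ 2 := by
    intro a ha
    rw [hL, List.mem_map] at ha
    obtain ⟨ν, _, rfl⟩ := ha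
    exact comm_mem _ _
  have T1 : (MonoidAlgebra.of ℤ Γ L.prod - 1 : MonoidAlgebra ℤ Γ)
      - (L.map (fun a => (MonoidAlgebra.of ℤ Γ a - 1 : MonoidAlgebra ℤ Γ))).sum
      ∈ (augIdeal Γ) ^ 4 := prod_congr L hmem
  have hsum : (L.map (fun a => (MonoidAlgebra.of ℤ Γ a - 1 : MonoidAlgebra ℤ Γ))).sum
      = ∑ ν : Fin g,
          (MonoidAlgebra.of ℤ Γ ⁅γ (Sum.inl ν), γ (Sum.inr ν)⁆ - 1 : MonoidAlgebra ℤ Γ) := by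
    rw [hL, List.map_map, Fin.sum_univ_def]
    rfl
  rw [hsum] at T1
  have T2 : (∑ ν : Fin g,
        (MonoidAlgebra.of ℤ Γ ⁅γ (Sum.inl ν), γ (Sum.inr ν)⁆ - 1 : MonoidAlgebra ℤ Γ))
      - (∑ ν : Fin g,
        ((MonoidAlgebra.of ℤ Γ (γ (Sum.inl ν)) - 1) * (MonoidAlgebra.of ℤ Γ (γ (Sum.inr ν)) - 1)
            - (MonoidAlgebra.of ℤ Γ (γ (Sum.inr ν)) - 1) * (MonoidAlgebra.of ℤ Γ (γ (Sum.inl ν)) - 1)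
          + ((MonoidAlgebra.of ℤ Γ (γ (Sum.inr ν)) - 1) * (MonoidAlgebra.of ℤ Γ (γ (Sum.inl ν)) - 1) * (MonoidAlgebra.of ℤ Γ (γ (Sum.inr ν)) - 1)
            - (MonoidAlgebra.of ℤ Γ (γ (Sum.inl ν)) - 1) * (MonoidAlgebra.of ℤ Γ (γ (Sum.inr ν)) - 1) * (MonoidAlgebra.of ℤ Γ (γ (Sum.inl ν)) - 1))
          - ((MonoidAlgebra.of ℤ Γ (γ (Sum.inl ν)) - 1) * (MonoidAlgebra.of ℤ Γ (γ (Sum.inr ν)) - 1) * (MonoidAlgebra.of ℤ Γ (γ (Sum.inr ν)) - 1)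
            - (MonoidAlgebra.of ℤ Γ (γ (Sum.inr ν)) - 1) * (MonoidAlgebra.of ℤ Γ (γ (Sum.inl ν)) - 1) * (MonoidAlgebra.of ℤ Γ (γ (Sum.inl ν)) - 1))))
      ∈ (augIdeal Γ) ^ 4 := by
    rw [← Finset.sum_sub_distrib]
    refine Submodule.sum_mem _ (fun ν _ => ?_)
    exact comm_congr (γ (Sum.inl ν)) (γ (Sum.inr ν))
  have hdelta : (MonoidAlgebra.of ℤ Γ L.prod - 1 : MonoidAlgebra ℤ Γ)
      = (MonoidAlgebra.of ℤ Γ δb - 1) + (MonoidAlgebra.of ℤ Γ δq - 1) +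
        (MonoidAlgebra.of ℤ Γ δb - 1) * (MonoidAlgebra.of ℤ Γ δq - 1) := by
    rw [hL, hrel, map_mul, ringid5]
  rw [← hdelta, show ∀ a b c : MonoidAlgebra ℤ Γ, c - a = -((a - b) + (b - c)) from
    fun a b c => by rw [sub_add_sub_cancel, neg_sub]]
  exact neg_mem (add_mem T1 T2)
end
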